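/- arXiv:1805.00746 — 2 statements merged into one kernel-verified Lean document; each statement's English description precedes it below -/
import Mathlib

section
/- Let n = 2 with coordinates (p,q) on U = ℝ². Define the metric g₁₁ = q² + 1, g₁₂ = g₂₁ = −p q, g₂₂ = p² + 1 (so that det g = p² + q² + 1 > 0 everywhere), define c_{ijk} := (1/3)(∂_j g_{ik} − ∂_k g_{ij}), and define the skew-symmetric field w by w₁₂ = −w₂₁ = 1/√(p² + q² + 1), w₁₁ = w₂₂ = 0. Then the triple (g, c, w) satisfies conditions (cond1) on ℝ². (This is the Hamiltonian structure underlying the so(3) Wadati–Konno–Ishikawa hierarchy.) -/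
open scoped BigOperators

/-- Partial derivative `∂_k f` in the `k`-th coordinate direction. -/
noncomputable def pd {n : ℕ} (k : Fin n) (f : (Fin n → ℝ) → ℝ) (u : Fin n → ℝ) : ℝ :=
  fderiv ℝ f u (Pi.single k 1)

/-- Conditions (cond1) for a triple `(g, c, w)` on a set `U ⊆ ℝⁿ`:
`g` is the (lower-index) metric `g_{ij}`, `c` are the lowered coefficients `c_{ijk}`,
`w` is the skew-symmetric 2-form `w_{ij}`, and `c^s_{jk} := g^{si} c_{ijk}` is computed
via the pointwise inverse matrix `(g u)⁻¹`. -/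
def Cond1 {n : ℕ} (U : Set (Fin n → ℝ))
    (g : (Fin n → ℝ) → Matrix (Fin n) (Fin n) ℝ)
    (c : (Fin n → ℝ) → Fin n → Fin n → Fin n → ℝ)
    (w : (Fin n → ℝ) → Matrix (Fin n) (Fin n) ℝ) : Prop :=
  ∀ u ∈ U,
    (∀ i j k, pd k (fun x => g x i j) u + c u i j k + c u j i k = 0) ∧
    (∀ i j k, c u i j k + c u i k j = 0) ∧
    (∀ i j k, pd k (fun x => g x i j) u + pd i (fun x => g x j k) u
        + pd j (fun x => g x k i) u = 0) ∧
    (∀ i j, w u i j + w u j i = 0) ∧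
    (∀ i j l, pd l (fun x => w x i j) u
        = ∑ s, (∑ a, (g u)⁻¹ s a * c u a i j) * w u s l) ∧
    (∀ m l p k, pd k (fun x => c x p m l) u
        + ∑ s, (∑ a, (g u)⁻¹ s a * c u a m l) * c u s p k + w u m l * w u p k = 0)

/-! With `a = (-q, p)` (the position vector turned by the rotation `J`), the metric is the rank-one
update `g = 1 + a aᵀ`, so `det g = 1 + |a|² = D` and `g a = D a`. In two dimensions the identity
`J_{jk} a_i + J_{ki} a_j + J_{ij} a_k = 0` turns the defining formula into `c_{ijk} = a_i J_{jk}`,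
and `w = J / √D`. Conditions (1)–(4) are then the skew-symmetry of `J`; raising the first index of
`c` divides it by `D`, after which (5) follows from `a J = -u`, and (6) from `∂_k a_p = J_{kp}` and
`|a|² + 1 = D`. -/

open Matrix

section PartialDerivative

variable {n : ℕ} {f h : (Fin n → ℝ) → ℝ} {u : Fin n → ℝ}

lemma pd_eq_of_hasFDerivAt {L : (Fin n → ℝ) →L[ℝ] ℝ} (hf : HasFDerivAt f L u) (k : Fin n) :
    pd k f u = L (Pi.single k 1) := by
  rw [pd, hf.fderiv]

lemma pd_const_add (c : ℝ) (k : Fin n) : pd k (fun x => c + f x) u = pd k f u := by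
  rw [pd, pd, fderiv_const_add]

lemma pd_mul (hf : DifferentiableAt ℝ f u) (hh : DifferentiableAt ℝ h u) (k : Fin n) :
    pd k (fun x => f x * h x) u = pd k f u * h u + f u * pd k h u := by
  simp only [pd, fderiv_fun_mul hf hh, _root_.add_apply, _root_.smul_apply, smul_eq_mul]
  ring

lemma pd_mul_const (hf : DifferentiableAt ℝ f u) (c : ℝ) (k : Fin n) :
    pd k (fun x => f x * c) u = pd k f u * c := by
  simp only [pd, fderiv_mul_const hf, _root_.smul_apply, smul_eq_mul]
  ring

lemma pd_comp {φ : ℝ → ℝ} {φ' : ℝ} (hφ : HasDerivAt φ φ' (f u))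
    (hf : DifferentiableAt ℝ f u) (k : Fin n) :
    pd k (fun x => φ (f x)) u = φ' * pd k f u :=
  pd_eq_of_hasFDerivAt (hφ.comp_hasFDerivAt u hf.hasFDerivAt) k

lemma hasFDerivAt_vecMul_apply (M : Matrix (Fin n) (Fin n) ℝ) (i : Fin n) (u : Fin n → ℝ) :
    HasFDerivAt (fun x => (x ᵥ* M) i)
      (ContinuousLinearMap.proj i ∘L LinearMap.toContinuousLinearMap M.vecMulLinear) u :=
  (ContinuousLinearMap.proj i ∘L LinearMap.toContinuousLinearMap M.vecMulLinear).hasFDerivAt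

lemma pd_vecMul_apply (M : Matrix (Fin n) (Fin n) ℝ) (i k : Fin n) :
    pd k (fun x => (x ᵥ* M) i) u = M k i := by
  simp [pd_eq_of_hasFDerivAt (hasFDerivAt_vecMul_apply M i u)]

end PartialDerivative

section RankOneUpdate

variable {ι K : Type*} [Fintype ι] [DecidableEq ι] [Field K] (v : ι → K)

lemma det_one_add_vecMulVec_self : det (1 + vecMulVec v v) = 1 + v ⬝ᵥ v := by
  rw [vecMulVec_eq Unit, det_one_add_replicateCol_mul_replicateRow]

lemma one_add_vecMulVec_self_mulVec : (1 + vecMulVec v v) *ᵥ v = (1 + v ⬝ᵥ v) • v := by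
  rw [add_mulVec, one_mulVec, vecMulVec_mulVec, op_smul_eq_smul, add_smul, one_smul]

lemma inv_one_add_vecMulVec_self_mulVec (hv : 1 + v ⬝ᵥ v ≠ 0) :
    (1 + vecMulVec v v)⁻¹ *ᵥ v = (1 + v ⬝ᵥ v)⁻¹ • v := by
  have hdet : IsUnit (1 + vecMulVec v v).det := by
    rw [det_one_add_vecMulVec_self]; exact hv.isUnit
  rw [eq_inv_smul_iff₀ hv, ← mulVec_smul, ← one_add_vecMulVec_self_mulVec, mulVec_mulVec,
    nonsing_inv_mul _ hdet, one_mulVec]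

end RankOneUpdate

lemma hasDerivAt_one_div_sqrt {t : ℝ} (ht : 0 < t) :
    HasDerivAt (fun s => 1 / √s) (-1 / (2 * t * √t)) t := by
  have h := (Real.hasDerivAt_sqrt ht.ne').fun_inv (Real.sqrt_pos.mpr ht).ne'
  rw [Real.sq_sqrt ht.le] at h
  simp only [one_div] at h ⊢
  exact h.congr_deriv (by field_simp)

namespace WKI

def J : Matrix (Fin 2) (Fin 2) ℝ := !![0, 1; -1, 0]

def rot (u : Fin 2 → ℝ) : Fin 2 → ℝ := u ᵥ* J

def D (u : Fin 2 → ℝ) : ℝ := u 0 ^ 2 + u 1 ^ 2 + 1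

def metric (u : Fin 2 → ℝ) : Matrix (Fin 2) (Fin 2) ℝ := 1 + vecMulVec (rot u) (rot u)

def connection (u : Fin 2 → ℝ) (i j k : Fin 2) : ℝ := rot u i * J j k

noncomputable def form (u : Fin 2 → ℝ) : Matrix (Fin 2) (Fin 2) ℝ := (1 / √(D u)) • J

lemma J_apply_swap (i j : Fin 2) : J j i = -J i j := by
  fin_cases i <;> fin_cases j <;> simp [J]

lemma J_mul_J : J * J = -1 := by
  ext i j
  fin_cases i <;> fin_cases j <;> simp [J]

lemma J_cyclic (v : Fin 2 → ℝ) (i j k : Fin 2) :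
    J j k * v i + J k i * v j + J i j * v k = 0 := by
  fin_cases i <;> fin_cases j <;> fin_cases k <;> simp [J]

lemma rot_vecMul_J (u : Fin 2 → ℝ) : rot u ᵥ* J = -u := by
  rw [rot, vecMul_vecMul, J_mul_J, vecMul_neg, vecMul_one]

lemma sum_rot_mul_J (u : Fin 2 → ℝ) (l : Fin 2) : ∑ s, rot u s * J s l = -u l :=
  congrFun (rot_vecMul_J u) l

lemma one_add_dotProduct_rot_self (u : Fin 2 → ℝ) : 1 + rot u ⬝ᵥ rot u = D u := by
  simp only [dotProduct, rot, vecMul, J, D, of_apply, cons_val', cons_val_fin_one,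
    Fin.sum_univ_two, cons_val_zero, cons_val_one]
  ring

lemma D_pos (u : Fin 2 → ℝ) : 0 < D u := by
  unfold D; positivity

lemma differentiableAt_D (u : Fin 2 → ℝ) : DifferentiableAt ℝ D u := by
  unfold D; fun_prop

lemma metric_eq (u : Fin 2 → ℝ) :
    !![(u 1) ^ 2 + 1, -(u 0 * u 1); -(u 0 * u 1), (u 0) ^ 2 + 1] = metric u := by
  ext i j
  fin_cases i <;> fin_cases j <;>
    simp [metric, rot, J, vecHead, vecTail] <;> ring

lemma det_metric (u : Fin 2 → ℝ) : (metric u).det = D u := by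
  rw [metric, det_one_add_vecMulVec_self, one_add_dotProduct_rot_self]

lemma sum_inv_metric_mul_connection (u : Fin 2 → ℝ) (s i j : Fin 2) :
    ∑ a, (metric u)⁻¹ s a * connection u a i j = connection u s i j / D u := by
  have hD : 1 + rot u ⬝ᵥ rot u ≠ 0 := by rw [one_add_dotProduct_rot_self]; exact (D_pos u).ne'
  have h := congrFun (inv_one_add_vecMulVec_self_mulVec (rot u) hD) s
  rw [one_add_dotProduct_rot_self] at h
  simp only [mulVec, dotProduct, Pi.smul_apply, smul_eq_mul] at h
  simp only [connection, metric, ← mul_assoc, ← Finset.sum_mul, h]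
  ring

lemma differentiableAt_rot_apply (u : Fin 2 → ℝ) (i : Fin 2) :
    DifferentiableAt ℝ (fun x => rot x i) u :=
  (hasFDerivAt_vecMul_apply J i u).differentiableAt

lemma pd_rot_apply (u : Fin 2 → ℝ) (i k : Fin 2) : pd k (fun x => rot x i) u = J k i :=
  pd_vecMul_apply J i k

lemma pd_metric (u : Fin 2 → ℝ) (i j k : Fin 2) :
    pd k (fun x => metric x i j) u = J k i * rot u j + rot u i * J k j := by
  simp only [metric, Matrix.add_apply, vecMulVec_apply]
  rw [pd_const_add, pd_mul (differentiableAt_rot_apply u i) (differentiableAt_rot_apply u j),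
    pd_rot_apply, pd_rot_apply]

lemma connection_eq (u : Fin 2 → ℝ) (i j k : Fin 2) :
    1 / 3 * (pd j (fun x => metric x i k) u - pd k (fun x => metric x i j) u)
      = connection u i j k := by
  rw [pd_metric, pd_metric, connection]
  linear_combination (-(1 / 3 : ℝ)) * J_cyclic (rot u) i j k
    + (1 / 3 : ℝ) * rot u k * J_apply_swap i j - (1 / 3 : ℝ) * rot u i * J_apply_swap j k

lemma pd_D (u : Fin 2 → ℝ) (k : Fin 2) : pd k D u = 2 * u k := by
  have h := (((hasFDerivAt_apply (𝕜 := ℝ) (0 : Fin 2) u).pow 2).fun_add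
    ((hasFDerivAt_apply (𝕜 := ℝ) (1 : Fin 2) u).pow 2)).add_const 1
  rw [pd_eq_of_hasFDerivAt (f := D) h]
  fin_cases k <;> simp

lemma pd_one_div_sqrt_D (u : Fin 2 → ℝ) (l : Fin 2) :
    pd l (fun x => 1 / √(D x)) u = -u l / (D u * √(D u)) := by
  rw [pd_comp (hasDerivAt_one_div_sqrt (D_pos u)) (differentiableAt_D u), pd_D]
  field_simp

lemma pd_form (u : Fin 2 → ℝ) (i j l : Fin 2) :
    pd l (fun x => form x i j) u = -u l / (D u * √(D u)) * J i j := by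
  have hd : DifferentiableAt ℝ (fun x => 1 / √(D x)) u :=
    ((hasDerivAt_one_div_sqrt (D_pos u)).comp_hasFDerivAt u
      (differentiableAt_D u).hasFDerivAt).differentiableAt
  simp only [form, Matrix.smul_apply, smul_eq_mul]
  rw [pd_mul_const hd, pd_one_div_sqrt_D]

lemma form_eq (u : Fin 2 → ℝ) :
    !![0, 1 / √((u 0) ^ 2 + (u 1) ^ 2 + 1); -(1 / √((u 0) ^ 2 + (u 1) ^ 2 + 1)), 0] = form u := by
  ext i j
  fin_cases i <;> fin_cases j <;> simp [form, D, J]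

lemma pd_metric_add_connection_add_connection (u : Fin 2 → ℝ) (i j k : Fin 2) :
    pd k (fun x => metric x i j) u + connection u i j k + connection u j i k = 0 := by
  rw [pd_metric, connection, connection]
  linear_combination rot u j * J_apply_swap k i + rot u i * J_apply_swap j k

lemma connection_add_connection_swap (u : Fin 2 → ℝ) (i j k : Fin 2) :
    connection u i j k + connection u i k j = 0 := by
  rw [connection, connection]
  linear_combination rot u i * J_apply_swap j k

lemma pd_metric_cyclic (u : Fin 2 → ℝ) (i j k : Fin 2) :
    pd k (fun x => metric x i j) u + pd i (fun x => metric x j k) u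
      + pd j (fun x => metric x k i) u = 0 := by
  rw [pd_metric, pd_metric, pd_metric]
  linear_combination rot u j * J_apply_swap k i + rot u i * J_apply_swap j k
    + rot u k * J_apply_swap i j

lemma form_add_form_swap (u : Fin 2 → ℝ) (i j : Fin 2) : form u i j + form u j i = 0 := by
  simp only [form, Matrix.smul_apply, smul_eq_mul]
  linear_combination 1 / √(D u) * J_apply_swap i j

lemma pd_form_eq_sum (u : Fin 2 → ℝ) (i j l : Fin 2) :
    pd l (fun x => form x i j) u
      = ∑ s, (∑ a, (metric u)⁻¹ s a * connection u a i j) * form u s l := by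
  rw [pd_form]
  simp only [sum_inv_metric_mul_connection]
  simp only [form, connection, Matrix.smul_apply, smul_eq_mul]
  calc -u l / (D u * √(D u)) * J i j
      = J i j / (D u * √(D u)) * ∑ s, rot u s * J s l := by rw [sum_rot_mul_J]; ring
    _ = ∑ s, rot u s * J i j / D u * (1 / √(D u) * J s l) := by
      rw [Finset.mul_sum]
      refine Finset.sum_congr rfl fun s _ => ?_
      field_simp

lemma pd_connection_add_sum_add_form_mul_form (u : Fin 2 → ℝ) (m l p k : Fin 2) :
    pd k (fun x => connection x p m l) u
      + ∑ s, (∑ a, (metric u)⁻¹ s a * connection u a m l) * connection u s p k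
      + form u m l * form u p k = 0 := by
  have hd := (D_pos u).ne'
  have hsum : ∑ s, rot u s * J m l / D u * (rot u s * J p k)
      = J m l * J p k * (D u - 1) / D u := by
    rw [← one_add_dotProduct_rot_self, add_sub_cancel_left, dotProduct, Finset.mul_sum,
      Finset.sum_div]
    refine Finset.sum_congr rfl fun s _ => ?_
    ring
  have hsqrt : 1 / √(D u) * (1 / √(D u)) = 1 / D u := by
    rw [div_mul_div_comm, one_mul, Real.mul_self_sqrt (D_pos u).le]
  simp only [sum_inv_metric_mul_connection]
  simp only [connection, pd_mul_const (differentiableAt_rot_apply u p), pd_rot_apply, form,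
    Matrix.smul_apply, smul_eq_mul]
  rw [hsum, J_apply_swap p k]
  linear_combination J m l * J p k * hsqrt + J p k * J m l * mul_inv_cancel₀ hd

end WKI

/-- the WKI (so(3) Wadati–Konno–Ishikawa) structure: on `ℝ²` with
`(p,q) = (u 0, u 1)`, the metric `g = !![q²+1, −pq; −pq, p²+1]` (with
`det g = p²+q²+1 > 0`), `c_{ijk} = (1/3)(∂_j g_{ik} − ∂_k g_{ij})` and the skew form
`w₁₂ = 1/√(p²+q²+1)` satisfy conditions (cond1). -/
theorem wki_satisfies_cond1
    (g : (Fin 2 → ℝ) → Matrix (Fin 2) (Fin 2) ℝ)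
    (hg : g = fun u => !![(u 1) ^ 2 + 1, -(u 0 * u 1); -(u 0 * u 1), (u 0) ^ 2 + 1])
    (c : (Fin 2 → ℝ) → Fin 2 → Fin 2 → Fin 2 → ℝ)
    (hc : c = fun u i j k =>
      (1 / 3) * (pd j (fun x => g x i k) u - pd k (fun x => g x i j) u))
    (w : (Fin 2 → ℝ) → Matrix (Fin 2) (Fin 2) ℝ)
    (hw : w = fun u => !![0, 1 / Real.sqrt ((u 0) ^ 2 + (u 1) ^ 2 + 1);
                          -(1 / Real.sqrt ((u 0) ^ 2 + (u 1) ^ 2 + 1)), 0]) :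
    (∀ u : Fin 2 → ℝ, (g u).det = (u 0) ^ 2 + (u 1) ^ 2 + 1 ∧ 0 < (g u).det) ∧
    Cond1 (Set.univ : Set (Fin 2 → ℝ)) g c w := by
  obtain rfl : g = WKI.metric := hg.trans (funext WKI.metric_eq)
  obtain rfl : c = WKI.connection :=
    hc.trans (funext fun u => funext fun i => funext fun j => funext fun k =>
      WKI.connection_eq u i j k)
  obtain rfl : w = WKI.form := hw.trans (funext WKI.form_eq)
  refine ⟨fun u => ⟨WKI.det_metric u, WKI.det_metric u ▸ WKI.D_pos u⟩, fun u _ => ?_⟩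
  exact ⟨WKI.pd_metric_add_connection_add_connection u, WKI.connection_add_connection_swap u,
    WKI.pd_metric_cyclic u, WKI.form_add_form_swap u, WKI.pd_form_eq_sum u,
    WKI.pd_connection_add_sum_add_form_mul_form u⟩
end

section
/- (Segre type [(24)], first subcase) Let n = 3 with coordinates (u¹,u²,u³), and let U = {u ∈ ℝ³ : 2u¹ + (u³)² > 0}. Define the symmetric metric g by g₁₁ = 1, g₁₂ = 0, g₁₃ = u³, g₂₂ = 1, g₂₃ = 0, g₃₃ = −2u¹; then det g = −2u¹ − (u³)² < 0 on U. Define c_{ijk} := (1/3)(∂_j g_{ik} − ∂_k g_{ij}) and the skew-symmetric field w by w₁₂ = w₂₃ = 0 and w₃₁ = 1/√(2u¹ + (u³)²) (with w_{ji} = −w_{ij}, w_{ii} = 0). Then (g, c, w) satisfies conditions (cond1) on U. -/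
open scoped BigOperators

/-!
Both `c` and `w` are built from the single constant skew form `A = e₃ ∧ e₁`:
`c_{ijk} = δ_{i3} A_{jk}` (constant, since `g` is affine in `u`) and `w = φ A` with
`φ = (2u¹ + (u³)²)^{-1/2}`. For such an ansatz conditions (1)–(4) reduce to skewness of `A`
and the formula for `∂g`, (5) reduces to `∂_l φ = φ g^{s3} A_{sl}`, and (6) to
`g^{33} + φ² = 0`; on `U` one has `g^{33} = -1/(2u¹ + (u³)²) = -φ²`.
-/

section pd

variable {n : ℕ}

lemma pd_of_hasFDerivAt {f : (Fin n → ℝ) → ℝ} {u : Fin n → ℝ} {L : (Fin n → ℝ) →L[ℝ] ℝ}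
    (h : HasFDerivAt f L u) (k : Fin n) : pd k f u = L (Pi.single k 1) := by
  rw [pd, h.fderiv]

lemma pd_const (b : ℝ) (k : Fin n) (u : Fin n → ℝ) : pd k (fun _ => b) u = 0 := by
  simp [pd]

lemma pd_const_mul (b : ℝ) (f : (Fin n → ℝ) → ℝ) (k : Fin n) (u : Fin n → ℝ) :
    pd k (fun x => b * f x) u = b * pd k f u := by
  simp only [pd, ← smul_eq_mul, ← Pi.smul_def, fderiv_const_smul_field]
  rfl

lemma pd_affine (b : ℝ) (v : Fin n → ℝ) (k : Fin n) (u : Fin n → ℝ) :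
    pd k (fun x => b + ∑ m, x m * v m) u = v k := by
  have hlin : HasFDerivAt (fun x : Fin n → ℝ => ∑ m, x m * v m)
      (∑ m, v m • ContinuousLinearMap.proj m) u :=
    HasFDerivAt.fun_sum fun m _ => by
      simpa only [mul_comm _ (v m)] using (hasFDerivAt_apply (𝕜 := ℝ) m u).const_mul (v m)
  rw [pd_of_hasFDerivAt (hlin.const_add b)]
  simp [Pi.single_apply]

lemma pd_one_div_sqrt {f : (Fin n → ℝ) → ℝ} {f' : (Fin n → ℝ) →L[ℝ] ℝ}
    {u : Fin n → ℝ} (hf : HasFDerivAt f f' u) (hpos : 0 < f u) (k : Fin n) :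
    pd k (fun x => 1 / √(f x)) u = -(1 / √(f u)) * f' (Pi.single k 1) / (2 * f u) := by
  have hsqrt : √(f u) ≠ 0 := (Real.sqrt_pos.mpr hpos).ne'
  have hinv : HasDerivAt (fun y => 1 / √y) (-(1 / (2 * √(f u))) / √(f u) ^ 2) (f u) := by
    simpa [one_div, Pi.inv_def] using (Real.hasDerivAt_sqrt hpos.ne').inv hsqrt
  change pd k ((fun y => 1 / √y) ∘ f) u = _
  rw [pd_of_hasFDerivAt (hinv.comp_hasFDerivAt u hf)]
  simp only [FunLike.coe_smul, Pi.smul_apply, smul_eq_mul]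
  rw [Real.sq_sqrt hpos.le]
  field_simp

end pd

theorem cond1_of_skew_rankOne {n : ℕ} {U : Set (Fin n → ℝ)}
    {g : (Fin n → ℝ) → Matrix (Fin n) (Fin n) ℝ} {φ : (Fin n → ℝ) → ℝ}
    (a : Fin n) {A : Matrix (Fin n) (Fin n) ℝ} (hA : ∀ i j, A i j + A j i = 0)
    (hg : ∀ u ∈ U, ∀ i j k, pd k (fun x => g x i j) u
      = -((if i = a then A j k else 0) + (if j = a then A i k else 0)))
    (hφ : ∀ u ∈ U, ∀ l, pd l φ u = φ u * ∑ s, (g u)⁻¹ s a * A s l)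
    (hginv : ∀ u ∈ U, (g u)⁻¹ a a + φ u ^ 2 = 0) :
    Cond1 U g (fun _ i j k => if i = a then A j k else 0) (fun u => φ u • A) := by
  intro u hu
  refine ⟨fun i j k => ?_, fun i j k => ?_, fun i j k => ?_, fun i j => ?_,
    fun i j l => ?_, fun m l p k => ?_⟩
  · rw [hg u hu]
    ring
  · dsimp only
    split_ifs <;> simp [hA]
  · rw [hg u hu, hg u hu, hg u hu]
    split_ifs <;> linarith [hA i j, hA j k, hA k i]
  · simp only [Matrix.smul_apply, smul_eq_mul, ← mul_add, hA, mul_zero]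
  · simp only [Matrix.smul_apply, smul_eq_mul, mul_comm (φ _), pd_const_mul, hφ u hu,
      mul_ite, mul_zero, Finset.sum_ite_eq', Finset.mem_univ, if_true]
    rw [Finset.sum_mul, Finset.mul_sum]
    exact Finset.sum_congr rfl fun s _ => by ring
  · simp only [pd_const, Matrix.smul_apply, smul_eq_mul, mul_ite, mul_zero,
      Finset.sum_ite_eq', Finset.mem_univ, if_true]
    linear_combination A m l * A p k * hginv u hu

def segreMetric (u : Fin 3 → ℝ) : Matrix (Fin 3) (Fin 3) ℝ :=
  !![1, 0, u 2; 0, 1, 0; u 2, 0, -(2 * u 0)]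

def segreMetricDeriv : Fin 3 → Matrix (Fin 3) (Fin 3) ℝ :=
  ![!![0, 0, 0; 0, 0, 0; 0, 0, -2], 0, !![0, 0, 1; 0, 0, 0; 1, 0, 0]]

def segreForm : Matrix (Fin 3) (Fin 3) ℝ :=
  !![0, 0, -1; 0, 0, 0; 1, 0, 0]

noncomputable def segreScale (u : Fin 3 → ℝ) : ℝ :=
  1 / √(2 * u 0 + u 2 ^ 2)

lemma segreMetric_apply_eq_affine (i j : Fin 3) :
    (fun x => segreMetric x i j)
      = fun x => segreMetric 0 i j + ∑ m, x m * segreMetricDeriv m i j := by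
  funext x
  fin_cases i <;> fin_cases j <;> simp [segreMetric, segreMetricDeriv, Fin.sum_univ_three, mul_comm]

lemma pd_segreMetric (u : Fin 3 → ℝ) (i j k : Fin 3) :
    pd k (fun x => segreMetric x i j) u = segreMetricDeriv k i j := by
  rw [segreMetric_apply_eq_affine, pd_affine]

lemma segreForm_add_transpose (i j : Fin 3) : segreForm i j + segreForm j i = 0 := by
  fin_cases i <;> fin_cases j <;> simp [segreForm]

lemma segreMetricDeriv_eq (i j k : Fin 3) : segreMetricDeriv k i j
    = -((if i = 2 then segreForm j k else 0) + (if j = 2 then segreForm i k else 0)) := by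
  fin_cases i <;> fin_cases j <;> fin_cases k <;>
    norm_num [segreMetricDeriv, segreForm, Fin.ext_iff]

lemma one_third_sub_segreMetricDeriv (i j k : Fin 3) :
    1 / 3 * (segreMetricDeriv j i k - segreMetricDeriv k i j)
      = if i = 2 then segreForm j k else 0 := by
  fin_cases i <;> fin_cases j <;> fin_cases k <;>
    norm_num [segreMetricDeriv, segreForm, Fin.ext_iff]

lemma segreMetric_det (u : Fin 3 → ℝ) : (segreMetric u).det = -(2 * u 0) - u 2 ^ 2 := by
  simp [segreMetric, Matrix.det_fin_three]
  ring

lemma segreMetric_inv {u : Fin 3 → ℝ} (hq : 2 * u 0 + u 2 ^ 2 ≠ 0) :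
    (segreMetric u)⁻¹ = !![2 * u 0 / (2 * u 0 + u 2 ^ 2), 0, u 2 / (2 * u 0 + u 2 ^ 2);
                           0, 1, 0;
                           u 2 / (2 * u 0 + u 2 ^ 2), 0, -(1 / (2 * u 0 + u 2 ^ 2))] := by
  refine Matrix.inv_eq_right_inv ?_
  ext i j
  fin_cases i <;> fin_cases j <;> simp [segreMetric, Matrix.mul_apply, Fin.sum_univ_three] <;>
    field_simp <;> ring

lemma pd_segreScale {u : Fin 3 → ℝ} (hq : 0 < 2 * u 0 + u 2 ^ 2) (l : Fin 3) :
    pd l segreScale u = segreScale u * ∑ s, (segreMetric u)⁻¹ s 2 * segreForm s l := by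
  have hq' : HasFDerivAt (fun x : Fin 3 → ℝ => 2 * x 0 + x 2 ^ 2)
      ((2 : ℝ) • ContinuousLinearMap.proj (R := ℝ) (φ := fun _ : Fin 3 => ℝ) 0
        + (2 * u 2) • ContinuousLinearMap.proj 2) u := by
    have h2 := (hasDerivAt_pow 2 (u 2)).comp_hasFDerivAt u (hasFDerivAt_apply (𝕜 := ℝ) 2 u)
    norm_num at h2
    exact ((hasFDerivAt_apply (𝕜 := ℝ) 0 u).const_mul 2).add h2
  unfold segreScale
  rw [pd_one_div_sqrt hq' hq, segreMetric_inv hq.ne']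
  fin_cases l <;> simp [segreForm, Fin.sum_univ_three] <;> field_simp

lemma segreMetric_inv_add_segreScale_sq {u : Fin 3 → ℝ} (hq : 0 < 2 * u 0 + u 2 ^ 2) :
    (segreMetric u)⁻¹ 2 2 + segreScale u ^ 2 = 0 := by
  simp [segreMetric_inv hq.ne', segreScale, Real.sq_sqrt hq.le]

/-- Segre type [(24)], first subcase. With `(u¹,u²,u³) = (u 0, u 1, u 2)`
and `U = {u : 2u¹ + (u³)² > 0}`, the metric `g = !![1,0,u³; 0,1,0; u³,0,−2u¹]`
(with `det g = −2u¹ − (u³)² < 0` on `U`), `c_{ijk} = (1/3)(∂_j g_{ik} − ∂_k g_{ij})`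
and the skew form with `w₁₂ = w₂₃ = 0`, `w₃₁ = 1/√(2u¹ + (u³)²)` satisfy (cond1) on `U`. -/
theorem segre_24_first_satisfies_cond1
    (U : Set (Fin 3 → ℝ)) (hU : U = {u | 0 < 2 * u 0 + (u 2) ^ 2})
    (g : (Fin 3 → ℝ) → Matrix (Fin 3) (Fin 3) ℝ)
    (hg : g = fun u => !![1, 0, u 2;
                          0, 1, 0;
                          u 2, 0, -(2 * u 0)])
    (c : (Fin 3 → ℝ) → Fin 3 → Fin 3 → Fin 3 → ℝ)
    (hc : c = fun u i j k =>
      (1 / 3) * (pd j (fun x => g x i k) u - pd k (fun x => g x i j) u))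
    (w : (Fin 3 → ℝ) → Matrix (Fin 3) (Fin 3) ℝ)
    (hw : w = fun u =>
      !![0, 0, -(1 / Real.sqrt (2 * u 0 + (u 2) ^ 2));
         0, 0, 0;
         1 / Real.sqrt (2 * u 0 + (u 2) ^ 2), 0, 0]) :
    (∀ u ∈ U, (g u).det = -(2 * u 0) - (u 2) ^ 2 ∧ (g u).det < 0) ∧
    Cond1 U g c w := by
  subst hU
  obtain rfl : g = segreMetric := hg
  obtain rfl : c = fun _ i j k => if i = 2 then segreForm j k else 0 := by
    simp only [hc, pd_segreMetric, one_third_sub_segreMetricDeriv]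
  obtain rfl : w = fun u => segreScale u • segreForm := by
    subst hw
    funext u
    ext i j
    fin_cases i <;> fin_cases j <;> simp [segreScale, segreForm]
  refine ⟨fun u hu => ?_, cond1_of_skew_rankOne 2 segreForm_add_transpose
    (fun _ _ i j k => by rw [pd_segreMetric, segreMetricDeriv_eq])
    (fun _ hu => pd_segreScale hu) (fun _ hu => segreMetric_inv_add_segreScale_sq hu)⟩
  exact ⟨segreMetric_det u, by rw [segreMetric_det]; linarith [hu.out]⟩
end
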